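/- For the kernel of the previous example (with discontinuity at $-\underline{1}$), the localized continuity coefficients with respect to the skeleton $\underline{\tau} = \{1(-1)^n : n\ge0\}\cup\{-\underline{1}\}$ satisfy, for each $j \ge 1$, $\alpha_k^j := \inf_{l \le j}\inf_{a_{-k}^{-1}}\sum_{a}\inf_{\underline{z}} P(a|(-1)^{l-1}1\,a_{-k}^{-1}\underline{z}) = 2\epsilon + (1-2\epsilon)\inf_{l\le j}\sum_{i=1}^{k} q_i^l$, which converges to $1$ as $k\to\infty$ for each fixed $j$. Hence $P$ is locally continuous with respect to $\underline{\tau}$ while not being (uniformly) continuous. -/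
import Mathlib


namespace Stmt14

open scoped Classical

/-- Same kernel as in the previous example (pasts `b : ℕ → Bool`, `true` = `1`):
`P(1|-1̲) = ε`, and for `ā ≠ -1̲` with `𝓛(ā)` the first backward time of a `1`,
`P(a|ā) = ε + (1-2ε) ∑_{n≥1} 1{a = a_{-𝓛(ā)-n}} q_n^{𝓛(ā)}`. -/
noncomputable def Pker (ε : ℝ) (q : ℕ → ℕ → ℝ) (a : Bool) (b : ℕ → Bool) : ℝ :=
  if ∃ i, b i = true then
    ε + (1 - 2 * ε) *
      ∑' n : ℕ, (if b (sInf {i | b i = true} + 1 + n) = a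
        then q (sInf {i | b i = true} + 1) (n + 1) else 0)
  else (if a then ε else 1 - ε)

/-- The past `1(-1)^{l-1} a_{-k}^{-1} z̲` (most recent positions carry the context
`1(-1)^{l-1}`, then `k` arbitrary symbols `y`, then `z̲`). -/
noncomputable def paste (l k : ℕ) (y : Fin k → Bool) (z : ℕ → Bool) : ℕ → Bool :=
  fun j => if j < l then decide (j = l - 1)
    else if h : j - l < k then y ⟨j - l, h⟩ else z (j - l - k)

/-- `α_k^j = inf_{1 ≤ l ≤ j} inf_{a_{-k}^{-1}} ∑_a inf_z P(a|1(-1)^{l-1} a_{-k}^{-1} z̲)`. -/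
noncomputable def alphaKJ (ε : ℝ) (q : ℕ → ℕ → ℝ) (k j : ℕ) : ℝ :=
  sInf {x | ∃ l : ℕ, 1 ≤ l ∧ l ≤ j ∧ ∃ y : Fin k → Bool,
    x = sInf {x1 | ∃ z : ℕ → Bool, x1 = Pker ε q true (paste l k y z)} +
        sInf {x2 | ∃ z : ℕ → Bool, x2 = Pker ε q false (paste l k y z)}}

lemma paste_true {l : ℕ} (hl : 1 ≤ l) (k : ℕ) (y : Fin k → Bool) (z : ℕ → Bool) :
    paste l k y z (l - 1) = true := by
  simp [paste, Nat.sub_lt hl one_pos]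

lemma paste_sInf {l : ℕ} (hl : 1 ≤ l) (k : ℕ) (y : Fin k → Bool) (z : ℕ → Bool) :
    sInf {i | paste l k y z i = true} = l - 1 := by
  have h1 : (l - 1) ∈ {i | paste l k y z i = true} := paste_true hl k y z
  refine le_antisymm (Nat.sInf_le h1) ?_
  by_contra h
  push_neg at h
  have h2 := Nat.sInf_mem (⟨_, h1⟩ : {i | paste l k y z i = true}.Nonempty)
  set m := sInf {i | paste l k y z i = true} with hm
  simp only [Set.mem_setOf_eq, paste] at h2
  rw [if_pos (by omega)] at h2
  simp only [decide_eq_true_eq] at h2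
  omega

lemma pker_paste (ε : ℝ) (q : ℕ → ℕ → ℝ) {l : ℕ} (hl : 1 ≤ l) (k : ℕ)
    (y : Fin k → Bool) (z : ℕ → Bool) (a : Bool) :
    Pker ε q a (paste l k y z)
      = ε + (1 - 2 * ε) * ∑' n : ℕ,
          (if (if h : n < k then y ⟨n, h⟩ else z (n - k)) = a then q l (n + 1) else 0) := by
  have hex : ∃ i, paste l k y z i = true := ⟨l - 1, paste_true hl k y z⟩
  rw [Pker, if_pos hex, paste_sInf hl]
  have hl1 : l - 1 + 1 = l := by omega
  rw [hl1]
  congr 2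
  apply tsum_congr
  intro n
  have hp : paste l k y z (l + n) = (if h : n < k then y ⟨n, h⟩ else z (n - k)) := by
    simp [paste]
  rw [hp]

lemma inf_over_z (ε : ℝ) (hε : ε ∈ Set.Ioo (0:ℝ) (1/2)) (q : ℕ → ℕ → ℝ)
    (hqpos : ∀ l n : ℕ, 1 ≤ l → 1 ≤ n → 0 ≤ q l n)
    (hqsum : ∀ l : ℕ, 1 ≤ l → HasSum (fun n : ℕ => q l (n + 1)) 1)
    {l : ℕ} (hl : 1 ≤ l) (k : ℕ) (y : Fin k → Bool) (a : Bool) :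
    sInf {x | ∃ z : ℕ → Bool, x = Pker ε q a (paste l k y z)} =
      ε + (1 - 2 * ε) * ∑ n ∈ Finset.range k,
        (if h : n < k then (if y ⟨n, h⟩ = a then q l (n + 1) else 0) else 0) := by
  have hc : (0:ℝ) ≤ 1 - 2 * ε := by
    have := hε.2; linarith
  have hq1 : ∀ n : ℕ, 0 ≤ q l (n + 1) := fun n => hqpos l (n + 1) hl (by omega)
  have hF0 : ∀ (z : ℕ → Bool) (n : ℕ),
      0 ≤ (if (if h : n < k then y ⟨n, h⟩ else z (n - k)) = a then q l (n + 1) else 0) := by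
    intro z n
    by_cases h : (if h : n < k then y ⟨n, h⟩ else z (n - k)) = a
    · rw [if_pos h]; exact hq1 n
    · rw [if_neg h]
  have hFle : ∀ (z : ℕ → Bool) (n : ℕ),
      (if (if h : n < k then y ⟨n, h⟩ else z (n - k)) = a then q l (n + 1) else 0) ≤ q l (n + 1) := by
    intro z n
    by_cases h : (if h : n < k then y ⟨n, h⟩ else z (n - k)) = a
    · rw [if_pos h]
    · rw [if_neg h]; exact hq1 n
  have hsumq : Summable (fun n : ℕ => q l (n + 1)) := (hqsum l hl).summable
  have hsum : ∀ z : ℕ → Bool, Summable (fun n : ℕ =>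
      if (if h : n < k then y ⟨n, h⟩ else z (n - k)) = a then q l (n + 1) else 0) := fun z =>
    Summable.of_nonneg_of_le (hF0 z) (hFle z) hsumq
  set z0 : ℕ → Bool := fun _ => !a with hz0
  have htz0 : (∑' n : ℕ, if (if h : n < k then y ⟨n, h⟩ else z0 (n - k)) = a
        then q l (n + 1) else 0)
      = ∑ n ∈ Finset.range k,
        (if h : n < k then (if y ⟨n, h⟩ = a then q l (n + 1) else 0) else 0) := by
    rw [tsum_eq_sum (s := Finset.range k)]
    · apply Finset.sum_congr rfl
      intro n hn
      have hnk : n < k := Finset.mem_range.mp hn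
      simp [hnk]
    · intro n hn
      have hnk : ¬ n < k := by simpa using hn
      simp [hnk, hz0]
  refine IsLeast.csInf_eq ?_
  constructor
  · refine ⟨z0, ?_⟩
    rw [pker_paste ε q hl k y z0 a, htz0]
  · rintro x ⟨z, rfl⟩
    rw [pker_paste ε q hl k y z a]
    have h1 : (∑ n ∈ Finset.range k,
          (if h : n < k then (if y ⟨n, h⟩ = a then q l (n + 1) else 0) else 0))
        ≤ ∑' n : ℕ, (if (if h : n < k then y ⟨n, h⟩ else z (n - k)) = a
            then q l (n + 1) else 0) := by
      calc ∑ n ∈ Finset.range k,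
            (if h : n < k then (if y ⟨n, h⟩ = a then q l (n + 1) else 0) else 0)
          = ∑ n ∈ Finset.range k,
            (if (if h : n < k then y ⟨n, h⟩ else z (n - k)) = a then q l (n + 1) else 0) := by
            refine Finset.sum_congr rfl fun n hn => ?_
            have hnk : n < k := Finset.mem_range.mp hn
            simp [hnk]
        _ ≤ _ := Summable.sum_le_tsum _ (fun n _ => hF0 z n) (hsum z)
    nlinarith [h1]

lemma pair_sum (ε : ℝ) (hε : ε ∈ Set.Ioo (0:ℝ) (1/2)) (q : ℕ → ℕ → ℝ)
    (hqpos : ∀ l n : ℕ, 1 ≤ l → 1 ≤ n → 0 ≤ q l n)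
    (hqsum : ∀ l : ℕ, 1 ≤ l → HasSum (fun n : ℕ => q l (n + 1)) 1)
    {l : ℕ} (hl : 1 ≤ l) (k : ℕ) (y : Fin k → Bool) :
    sInf {x1 | ∃ z : ℕ → Bool, x1 = Pker ε q true (paste l k y z)} +
        sInf {x2 | ∃ z : ℕ → Bool, x2 = Pker ε q false (paste l k y z)}
      = 2 * ε + (1 - 2 * ε) * ∑ i ∈ Finset.range k, q l (i + 1) := by
  rw [inf_over_z ε hε q hqpos hqsum hl k y true, inf_over_z ε hε q hqpos hqsum hl k y false]
  have hsum : (∑ n ∈ Finset.range k,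
        (if h : n < k then (if y ⟨n, h⟩ = true then q l (n + 1) else 0) else 0)) +
      (∑ n ∈ Finset.range k,
        (if h : n < k then (if y ⟨n, h⟩ = false then q l (n + 1) else 0) else 0))
      = ∑ i ∈ Finset.range k, q l (i + 1) := by
    rw [← Finset.sum_add_distrib]
    refine Finset.sum_congr rfl fun n hn => ?_
    have hnk : n < k := Finset.mem_range.mp hn
    rcases Bool.eq_false_or_eq_true (y ⟨n, hnk⟩) with h | h <;> simp [hnk, h]
  linear_combination (1 - 2 * ε) * hsum

lemma tendsto_inf' : ∀ (s : Finset ℕ) (hs : s.Nonempty) (f : ℕ → ℕ → ℝ) (L : ℝ),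
    (∀ l ∈ s, Filter.Tendsto (f l) Filter.atTop (nhds L)) →
    Filter.Tendsto (fun k => s.inf' hs (fun l => f l k)) Filter.atTop (nhds L) := by
  intro s hs
  induction hs using Finset.Nonempty.cons_induction with
  | singleton a =>
      intro f L h
      simpa using h a (by simp)
  | cons a s ha hs ih =>
      intro f L h
      have h1 := h a (Finset.mem_cons_self a s)
      have h2 := ih f L (fun l hl => h l (Finset.mem_cons.mpr (Or.inr hl)))
      have heq : (fun k => (Finset.cons a s ha).inf' (Finset.cons_nonempty ha) fun l => f l k)
          = fun k => min (f a k) (s.inf' hs fun l => f l k) := by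
        funext k
        exact Finset.inf'_cons (H := hs) (f := fun l => f l k)
      rw [heq]
      have := h1.min h2
      simpa using this

/-- The localized continuity coefficients w.r.t. the skeleton
`τ̲ = {1(-1)^n : n ≥ 0} ∪ {-1̲}` satisfy
`α_k^j = 2ε + (1-2ε) inf_{l ≤ j} ∑_{i=1}^k q_i^l → 1` as `k → ∞`, for each fixed
`j ≥ 1`: the kernel is locally continuous with respect to `τ̲`. -/
theorem stmt14 (ε : ℝ) (hε : ε ∈ Set.Ioo (0 : ℝ) (1 / 2))
    (q : ℕ → ℕ → ℝ) (hqpos : ∀ l n : ℕ, 1 ≤ l → 1 ≤ n → 0 ≤ q l n)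
    (hqsum : ∀ l : ℕ, 1 ≤ l → HasSum (fun n : ℕ => q l (n + 1)) 1) :
    ∀ j : ℕ, 1 ≤ j →
      (∀ k : ℕ, alphaKJ ε q k j
        = 2 * ε + (1 - 2 * ε) *
            sInf {s | ∃ l : ℕ, 1 ≤ l ∧ l ≤ j ∧ s = ∑ i ∈ Finset.range k, q l (i + 1)}) ∧
      Filter.Tendsto (fun k => alphaKJ ε q k j) Filter.atTop (nhds 1) := by
  intro j hj
  have hc : (0:ℝ) ≤ 1 - 2 * ε := by have := hε.2; linarith
  have hne : (Finset.Icc 1 j).Nonempty := ⟨1, Finset.mem_Icc.mpr ⟨le_refl 1, hj⟩⟩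
  have hSset : ∀ k : ℕ, {s | ∃ l : ℕ, 1 ≤ l ∧ l ≤ j ∧ s = ∑ i ∈ Finset.range k, q l (i + 1)}
      = (fun l => ∑ i ∈ Finset.range k, q l (i + 1)) '' ↑(Finset.Icc 1 j) := by
    intro k; ext x
    simp only [Set.mem_setOf_eq, Set.mem_image, Finset.coe_Icc, Set.mem_Icc]
    constructor
    · rintro ⟨l, h1, h2, rfl⟩; exact ⟨l, ⟨h1, h2⟩, rfl⟩
    · rintro ⟨l, ⟨h1, h2⟩, rfl⟩; exact ⟨l, h1, h2, rfl⟩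
  have hAset : ∀ k : ℕ, {x | ∃ l : ℕ, 1 ≤ l ∧ l ≤ j ∧ ∃ y : Fin k → Bool,
        x = sInf {x1 | ∃ z : ℕ → Bool, x1 = Pker ε q true (paste l k y z)} +
            sInf {x2 | ∃ z : ℕ → Bool, x2 = Pker ε q false (paste l k y z)}}
      = (fun s => 2 * ε + (1 - 2 * ε) * s) ''
          {s | ∃ l : ℕ, 1 ≤ l ∧ l ≤ j ∧ s = ∑ i ∈ Finset.range k, q l (i + 1)} := by
    intro k; ext x
    simp only [Set.mem_setOf_eq, Set.mem_image]
    constructor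
    · rintro ⟨l, h1, h2, y, rfl⟩
      exact ⟨∑ i ∈ Finset.range k, q l (i + 1), ⟨l, h1, h2, rfl⟩,
        (pair_sum ε hε q hqpos hqsum h1 k y).symm⟩
    · rintro ⟨s, ⟨l, h1, h2, rfl⟩, rfl⟩
      exact ⟨l, h1, h2, fun _ => true, (pair_sum ε hε q hqpos hqsum h1 k _).symm⟩
  have hmono : Monotone (fun s : ℝ => 2 * ε + (1 - 2 * ε) * s) := fun x y' hxy => by
    have := mul_le_mul_of_nonneg_left hxy hc
    simp only
    linarith
  have hkey : ∀ k : ℕ, alphaKJ ε q k j = 2 * ε + (1 - 2 * ε) *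
      sInf {s | ∃ l : ℕ, 1 ≤ l ∧ l ≤ j ∧ s = ∑ i ∈ Finset.range k, q l (i + 1)} := by
    intro k
    have hne' : {s | ∃ l : ℕ, 1 ≤ l ∧ l ≤ j ∧
        s = ∑ i ∈ Finset.range k, q l (i + 1)}.Nonempty :=
      ⟨∑ i ∈ Finset.range k, q 1 (i + 1), 1, le_refl 1, hj, rfl⟩
    have hbdd : BddBelow {s | ∃ l : ℕ, 1 ≤ l ∧ l ≤ j ∧
        s = ∑ i ∈ Finset.range k, q l (i + 1)} := by
      rw [hSset k]
      exact (Set.Finite.image _ (Finset.finite_toSet _)).bddBelow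
    rw [alphaKJ, hAset k]
    exact (Monotone.map_csInf_of_continuousAt (by fun_prop) hmono hne' hbdd).symm
  refine ⟨hkey, ?_⟩
  have hsinf : ∀ k : ℕ,
      sInf {s | ∃ l : ℕ, 1 ≤ l ∧ l ≤ j ∧ s = ∑ i ∈ Finset.range k, q l (i + 1)}
      = (Finset.Icc 1 j).inf' hne (fun l => ∑ i ∈ Finset.range k, q l (i + 1)) := by
    intro k
    rw [hSset k, ← Finset.inf'_eq_csInf_image]
  have htend : Filter.Tendsto
      (fun k => (Finset.Icc 1 j).inf' hne (fun l => ∑ i ∈ Finset.range k, q l (i + 1)))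
      Filter.atTop (nhds 1) := by
    apply tendsto_inf'
    intro l hl
    exact (hqsum l (Finset.mem_Icc.mp hl).1).tendsto_sum_nat
  have hT := (tendsto_const_nhds (x := 2 * ε) (f := Filter.atTop)).add
    (htend.const_mul (1 - 2 * ε))
  have h1 : 2 * ε + (1 - 2 * ε) * (1:ℝ) = 1 := by ring
  rw [h1] at hT
  exact hT.congr fun k => by rw [hkey k, hsinf k]


end Stmt14
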